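/- Let f be pseudo-involutory with f'(0)=1, f ≠ -z, and write h_f = (√(zf))^ as h_f(z) = z·h_o(z²) + z²·h_e(z²), decomposing into odd and even parts. Then the B-function defined by f - z = (z·B_f(z))∘(z·f(z)) satisfies B_f = 2·h_e. -/

import Mathlib

open PowerSeries

/-- Composition `f ∘ g` of formal power series over `ℝ`, i.e. `f(g(z))`
(the usual composition when `g` has zero constant term). -/
noncomputable def pscomp (f g : PowerSeries ℝ) : PowerSeries ℝ :=
  PowerSeries.mk fun n => ∑ k ∈ Finset.range (n + 1), coeff k f * coeff n (g ^ k)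

namespace StmtAux

lemma coeff_pscomp (f g : PowerSeries ℝ) (n : ℕ) :
    coeff n (pscomp f g) = ∑ k ∈ Finset.range (n + 1), coeff k f * coeff n (g ^ k) := by
  simp [pscomp]

lemma coeff_pow_eq_zero {g : PowerSeries ℝ} (hg : constantCoeff g = 0)
    {n k : ℕ} (h : n < k) : coeff n (g ^ k) = 0 :=
  (X_pow_dvd_iff.mp (pow_dvd_pow_of_dvd (X_dvd_iff.mpr hg) k)) n h

lemma coeff_pscomp_eq_aeval {g : PowerSeries ℝ} (hg : constantCoeff g = 0)
    (f : PowerSeries ℝ) {n m : ℕ} (h : n < m) :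
    coeff n (pscomp f g) = coeff n (Polynomial.aeval g (trunc m f)) := by
  obtain ⟨m, rfl⟩ : ∃ m', m = m' + 1 := ⟨m - 1, by omega⟩
  rw [coeff_pscomp]
  calc ∑ k ∈ Finset.range (n + 1), coeff k f * coeff n (g ^ k)
      = ∑ k ∈ Finset.range (m + 1), coeff k f * coeff n (g ^ k) := by
        apply Finset.sum_subset (Finset.range_subset_range.mpr (by omega))
        intro k hk hk2
        simp only [Finset.mem_range] at hk hk2
        rw [coeff_pow_eq_zero hg (by omega), mul_zero]
    _ = coeff n (Polynomial.aeval g (trunc (m + 1) f)) := by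
        rw [Polynomial.aeval_eq_sum_range' (natDegree_trunc_lt f m), map_sum]
        apply Finset.sum_congr rfl
        intro i hi
        simp only [Finset.mem_range] at hi
        rw [coeff_trunc, if_pos hi, LinearMap.map_smul, smul_eq_mul]

lemma coeff_aeval_eq_zero {g : PowerSeries ℝ} (hg : constantCoeff g = 0)
    {p : Polynomial ℝ} {n : ℕ} (h : ∀ k ≤ n, p.coeff k = 0) :
    coeff n (Polynomial.aeval g p) = 0 := by
  rw [Polynomial.aeval_eq_sum_range, map_sum]
  apply Finset.sum_eq_zero
  intro i _
  rw [LinearMap.map_smul, smul_eq_mul]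
  rcases le_or_gt i n with hi | hi
  · rw [h i hi, zero_mul]
  · rw [coeff_pow_eq_zero hg hi, mul_zero]

lemma pscomp_mul {g : PowerSeries ℝ} (hg : constantCoeff g = 0) (f₁ f₂ : PowerSeries ℝ) :
    pscomp (f₁ * f₂) g = pscomp f₁ g * pscomp f₂ g := by
  ext n
  set m := n + 1 with hm
  have key : coeff n (Polynomial.aeval g (trunc m (f₁ * f₂)))
      = coeff n (Polynomial.aeval g (trunc m f₁ * trunc m f₂)) := by
    have hdiff : coeff n (Polynomial.aeval g (trunc m (f₁ * f₂) - trunc m f₁ * trunc m f₂)) = 0 := by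
      apply coeff_aeval_eq_zero hg
      intro k hk
      rw [Polynomial.coeff_sub, coeff_trunc, if_pos (by omega),
        Polynomial.coeff_mul, PowerSeries.coeff_mul, sub_eq_zero]
      apply Finset.sum_congr rfl
      intro x hx
      rw [Finset.HasAntidiagonal.mem_antidiagonal] at hx
      rw [coeff_trunc, coeff_trunc, if_pos (by omega), if_pos (by omega)]
    rw [map_sub, map_sub] at hdiff
    linarith [hdiff]
  rw [coeff_pscomp_eq_aeval hg _ (by omega : n < m), key, map_mul,
    PowerSeries.coeff_mul, PowerSeries.coeff_mul]
  apply Finset.sum_congr rfl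
  intro x hx
  rw [Finset.HasAntidiagonal.mem_antidiagonal] at hx
  rw [coeff_pscomp_eq_aeval hg f₁ (show x.1 < m by omega),
    coeff_pscomp_eq_aeval hg f₂ (show x.2 < m by omega)]

lemma pscomp_add (f₁ f₂ g : PowerSeries ℝ) :
    pscomp (f₁ + f₂) g = pscomp f₁ g + pscomp f₂ g := by
  ext n
  simp [coeff_pscomp, add_mul, Finset.sum_add_distrib]

lemma pscomp_neg (f g : PowerSeries ℝ) : pscomp (-f) g = -pscomp f g := by
  ext n
  simp [coeff_pscomp, Finset.sum_neg_distrib]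

lemma pscomp_sub (f₁ f₂ g : PowerSeries ℝ) :
    pscomp (f₁ - f₂) g = pscomp f₁ g - pscomp f₂ g := by
  rw [sub_eq_add_neg, pscomp_add, pscomp_neg, sub_eq_add_neg]

lemma pscomp_one (g : PowerSeries ℝ) : pscomp 1 g = 1 := by
  ext n
  rw [coeff_pscomp, Finset.sum_eq_single 0]
  · simp
  · intro k _ hk
    rw [PowerSeries.coeff_one, if_neg hk, zero_mul]
  · simp

lemma pscomp_C (a : ℝ) (g : PowerSeries ℝ) : pscomp (C a) g = C a := by
  ext n
  rw [coeff_pscomp, Finset.sum_eq_single 0]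
  · simp [coeff_C]
  · intro k _ hk
    rw [coeff_C, if_neg hk, zero_mul]
  · simp

lemma pscomp_X_left {g : PowerSeries ℝ} (hg : constantCoeff g = 0) :
    pscomp X g = g := by
  ext n
  rw [coeff_pscomp, Finset.sum_eq_single 1]
  · simp
  · intro k _ hk
    rw [coeff_X, if_neg hk, zero_mul]
  · intro h1
    simp only [Finset.mem_range, not_lt] at h1
    obtain rfl : n = 0 := by omega
    simp [hg, coeff_zero_eq_constantCoeff]

lemma pscomp_X_right (f : PowerSeries ℝ) : pscomp f X = f := by
  ext n
  rw [coeff_pscomp, Finset.sum_eq_single n]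
  · simp
  · intro k _ hk
    rw [coeff_X_pow, if_neg (fun h => hk h.symm), mul_zero]
  · simp

lemma constantCoeff_pscomp (f g : PowerSeries ℝ) :
    constantCoeff (pscomp f g) = constantCoeff f := by
  have := coeff_pscomp f g 0
  simp only [zero_add, Finset.range_one, Finset.sum_singleton, pow_zero, PowerSeries.coeff_one] at this
  simpa [coeff_zero_eq_constantCoeff] using this

lemma coeff_one_pscomp (f g : PowerSeries ℝ) :
    coeff 1 (pscomp f g) = coeff 1 f * coeff 1 g := by
  rw [coeff_pscomp]
  rw [show Finset.range 2 = {0, 1} by rfl, Finset.sum_insert (by simp), Finset.sum_singleton]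
  simp

lemma pscomp_pow {g : PowerSeries ℝ} (hg : constantCoeff g = 0) (f : PowerSeries ℝ) (k : ℕ) :
    pscomp (f ^ k) g = pscomp f g ^ k := by
  induction k with
  | zero => simpa using pscomp_one g
  | succ k ih => rw [pow_succ, pscomp_mul hg, ih, pow_succ]

lemma pscomp_smul (a : ℝ) (f g : PowerSeries ℝ) :
    pscomp (a • f) g = a • pscomp f g := by
  ext n
  simp [coeff_pscomp, Finset.mul_sum, mul_assoc]

lemma pscomp_aeval {c : PowerSeries ℝ} (hc : constantCoeff c = 0)
    (p : Polynomial ℝ) (b : PowerSeries ℝ) :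
    pscomp (Polynomial.aeval b p) c = Polynomial.aeval (pscomp b c) p := by
  induction p using Polynomial.induction_on' with
  | add p q hp hq => rw [map_add, pscomp_add, hp, hq, map_add]
  | monomial k a =>
    rw [Polynomial.aeval_monomial, Polynomial.aeval_monomial]
    have : (algebraMap ℝ (PowerSeries ℝ)) a = C a := rfl
    rw [this, pscomp_mul hc, pscomp_C, pscomp_pow hc]

lemma coeff_pscomp_congr {g : PowerSeries ℝ} (hg : constantCoeff g = 0)
    {f₁ f₂ : PowerSeries ℝ} {n : ℕ} (h : ∀ k ≤ n, coeff k f₁ = coeff k f₂) :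
    coeff n (pscomp f₁ g) = coeff n (pscomp f₂ g) := by
  have htr : trunc (n + 1) f₁ = trunc (n + 1) f₂ := by
    apply Polynomial.ext
    intro k
    rw [coeff_trunc, coeff_trunc]
    split_ifs with hk
    · exact h k (by omega)
    · rfl
  rw [coeff_pscomp_eq_aeval hg f₁ (Nat.lt_succ_self n),
    coeff_pscomp_eq_aeval hg f₂ (Nat.lt_succ_self n), htr]

lemma pscomp_assoc {a b c : PowerSeries ℝ} (hb : constantCoeff b = 0)
    (hc : constantCoeff c = 0) :
    pscomp (pscomp a b) c = pscomp a (pscomp b c) := by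
  ext n
  have hbc : constantCoeff (pscomp b c) = 0 := by rw [constantCoeff_pscomp, hb]
  have step1 : coeff n (pscomp (pscomp a b) c)
      = coeff n (pscomp (Polynomial.aeval b (trunc (n + 1) a)) c) := by
    apply coeff_pscomp_congr hc
    intro k hk
    exact coeff_pscomp_eq_aeval hb a (by omega)
  rw [step1, pscomp_aeval hc,
    ← coeff_pscomp_eq_aeval hbc a (Nat.lt_succ_self n)]

lemma coeff_pscomp_Xsq (A : PowerSeries ℝ) (n : ℕ) :
    coeff (2 * n) (pscomp A (X ^ 2)) = coeff n A := by
  rw [coeff_pscomp, Finset.sum_eq_single n]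
  · rw [← pow_mul, coeff_X_pow, if_pos rfl, mul_one]
  · intro k _ hk
    rw [← pow_mul, coeff_X_pow, if_neg (by omega), mul_zero]
  · intro h
    simp only [Finset.mem_range] at h
    omega

end StmtAux

open StmtAux in
/-- For pseudo-involutory f ≠ -z, writing the pseudo-half h_f = (√(zf))^ as
h_f(z) = z·h_o(z²) + z²·h_e(z²), the B-function satisfies B_f = 2·h_e. -/
theorem stmt_5 (f s sbar ho he B : PowerSeries ℝ)
    (hf0 : constantCoeff f = 0) (hf1 : coeff 1 f = 1)
    (hpi : pscomp f (-f) = -X) (hne : f ≠ -X)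
    -- s = √(zf)
    (hsq : s ^ 2 = X * f) (hs0 : constantCoeff s = 0) (hs1 : coeff 1 s = 1)
    -- sbar is the compositional inverse of s, so h_f = -(sbar∘(-z))
    (hi1 : pscomp s sbar = X) (hi2 : pscomp sbar s = X)
    -- decomposition of h_f into odd and even parts
    (hdec : -(pscomp sbar (-X)) = X * pscomp ho (X ^ 2) + X ^ 2 * pscomp he (X ^ 2))
    -- B is the B-function of f : f - z = (z·B(z)) ∘ (z·f(z))
    (hB : f - X = X * f * pscomp B (X * f)) :
    B = 2 * he := by
  have hnegf0 : constantCoeff (-f) = 0 := by rw [map_neg, hf0, neg_zero]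
  have hX0 : constantCoeff (X : PowerSeries ℝ) = 0 := constantCoeff_X
  have hnegX0 : constantCoeff (-X : PowerSeries ℝ) = 0 := by rw [map_neg, hX0, neg_zero]
  have hXsq0 : constantCoeff ((X : PowerSeries ℝ) ^ 2) = 0 := by
    rw [map_pow, hX0]; ring
  have hXf0 : constantCoeff (X * f) = 0 := by rw [map_mul, hX0, zero_mul]
  have hsbar0 : constantCoeff sbar = 0 := by
    have h := constantCoeff_pscomp sbar s
    rw [hi2, hX0] at h
    exact h.symm
  -- Step 1 : s ∘ (-f) = -s
  have hA2 : pscomp s (-f) ^ 2 = s ^ 2 := by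
    rw [← pscomp_pow hnegf0, hsq, pscomp_mul hnegf0, pscomp_X_left hnegf0, hpi]
    ring
  have hsign : pscomp s (-f) = -s := by
    have hzero : (pscomp s (-f) - s) * (pscomp s (-f) + s) = 0 := by
      linear_combination hA2
    rcases mul_eq_zero.mp hzero with h | h
    · exfalso
      have h1 : pscomp s (-f) = s := sub_eq_zero.mp h
      have h2 := coeff_one_pscomp s (-f)
      rw [h1, hs1, map_neg, hf1] at h2
      norm_num at h2
    · exact eq_neg_of_add_eq_zero_left h
  -- Step 2 : sbar(-z) = -f(sbar(z))
  have hY0 : constantCoeff (-(pscomp f sbar)) = 0 := by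
    rw [map_neg, constantCoeff_pscomp, hf0, neg_zero]
  have e1 : pscomp s (-(pscomp f sbar)) = -X := by
    rw [← pscomp_neg f sbar, ← pscomp_assoc hnegf0 hsbar0, hsign, pscomp_neg, hi1]
  have hkey : pscomp sbar (-X) = -(pscomp f sbar) := by
    calc pscomp sbar (-X) = pscomp sbar (pscomp s (-(pscomp f sbar))) := by rw [e1]
      _ = pscomp (pscomp sbar s) (-(pscomp f sbar)) := (pscomp_assoc hs0 hY0).symm
      _ = -(pscomp f sbar) := by rw [hi2, pscomp_X_left hY0]
  have hfsbar : pscomp f sbar = X * pscomp ho (X ^ 2) + X ^ 2 * pscomp he (X ^ 2) := by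
    rw [← hdec, hkey, neg_neg]
  -- Step 3 : formula for sbar, composing hdec with -X
  have hXnegX : pscomp X (-X : PowerSeries ℝ) = -X := pscomp_X_left hnegX0
  have hnegXnegX : pscomp (-X) (-X : PowerSeries ℝ) = X := by
    rw [pscomp_neg, hXnegX, neg_neg]
  have hX2negX : pscomp (X ^ 2) (-X : PowerSeries ℝ) = X ^ 2 := by
    rw [pscomp_pow hnegX0, hXnegX]; ring
  have hsbar_form : sbar = X * pscomp ho (X ^ 2) - X ^ 2 * pscomp he (X ^ 2) := by
    have hcmp : pscomp (-(pscomp sbar (-X))) (-X)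
        = pscomp (X * pscomp ho (X ^ 2) + X ^ 2 * pscomp he (X ^ 2)) (-X) := by rw [hdec]
    rw [pscomp_neg, pscomp_assoc hnegX0 hnegX0, hnegXnegX, pscomp_X_right,
      pscomp_add, pscomp_mul hnegX0, pscomp_mul hnegX0,
      pscomp_assoc hXsq0 hnegX0, pscomp_assoc hXsq0 hnegX0,
      hXnegX, hX2negX] at hcmp
    linear_combination -hcmp
  -- Step 4 : compose hB with sbar
  have hXfsbar : pscomp (X * f) sbar = X ^ 2 := by
    rw [← hsq, pscomp_pow hsbar0, hi1]
  have hcomp_hB : pscomp f sbar - sbar = X ^ 2 * pscomp B (X ^ 2) := by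
    have hcmp : pscomp (f - X) sbar = pscomp (X * f * pscomp B (X * f)) sbar := by rw [← hB]
    rw [pscomp_sub, pscomp_X_left hsbar0, pscomp_mul hsbar0,
      pscomp_assoc hXf0 hsbar0, hXfsbar] at hcmp
    exact hcmp
  -- Step 5 : cancel X^2 and deduce B = 2 he
  have h2c : pscomp (2 * he) (X ^ 2) = 2 * pscomp he (X ^ 2) := by
    rw [pscomp_mul hXsq0, show (2 : PowerSeries ℝ) = C 2 from by
      rw [map_ofNat], pscomp_C]
  have hfinal : X ^ 2 * pscomp B (X ^ 2) = X ^ 2 * pscomp (2 * he) (X ^ 2) := by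
    rw [h2c]
    linear_combination -hcomp_hB + hfsbar - hsbar_form
  have hX2ne : ((X : PowerSeries ℝ) ^ 2) ≠ 0 := pow_ne_zero 2 X_ne_zero
  have hcancel : pscomp B (X ^ 2) = pscomp (2 * he) (X ^ 2) :=
    mul_left_cancel₀ hX2ne hfinal
  ext n
  have h := congrArg (coeff (2 * n)) hcancel
  rwa [coeff_pscomp_Xsq, coeff_pscomp_Xsq] at h
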